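/- For every w ∈ ℝⁿ and every f ∈ 𝔪·R[M]^w (the ideal of R[M]^w generated by elements of K of strictly positive valuation), there exists a Γ-rational polytope P with w ∈ P and f ∈ 𝔪·R[M]^P. -/

import Mathlib

open scoped BigOperators

/-- A real-valued nonarchimedean valuation on a field `K`, written additively with
values in `ℝ ∪ {∞}`. -/
structure NAVal (K : Type*) [Field K] where
  v : K → WithTop ℝ
  v_eq_top_iff : ∀ a : K, v a = ⊤ ↔ a = 0
  v_mul : ∀ a b : K, v (a * b) = v a + v b
  v_add : ∀ a b : K, min (v a) (v b) ≤ v (a + b)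

/-- The valuation is nontrivial. -/
def NAVal.IsNontrivial {K : Type*} [Field K] (ν : NAVal K) : Prop :=
  ∃ a : K, ν.v a ≠ 0 ∧ ν.v a ≠ ⊤

/-- The value group `Γ = val(K×) ⊆ ℝ`. -/
def NAVal.valueGroup {K : Type*} [Field K] (ν : NAVal K) : Set ℝ :=
  {γ : ℝ | ∃ a : K, a ≠ 0 ∧ ν.v a = (γ : WithTop ℝ)}

/-- The standard pairing `⟨u, x⟩` between `u ∈ ℤⁿ` and `x ∈ ℝⁿ`. -/
def pairing {n : ℕ} (u : Fin n → ℤ) (x : Fin n → ℝ) : ℝ :=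
  ∑ i, (u i : ℝ) * x i

/-- The tilted algebra `R[M]^S ⊆ K[M]`: Laurent polynomials `f = Σ a_u χ^u` with
`val(a_u) + ⟨u, x⟩ ≥ 0` for all `u ∈ M` and all `x ∈ S`. -/
def tilted {K : Type*} [Field K] (ν : NAVal K) {n : ℕ} (S : Set (Fin n → ℝ)) :
    Set (AddMonoidAlgebra K (Fin n → ℤ)) :=
  {f | ∀ u : Fin n → ℤ, ∀ x ∈ S, (0 : WithTop ℝ) ≤ ν.v (f.coeff u) + ((pairing u x : ℝ) : WithTop ℝ)}

/-- `P ⊆ ℝⁿ` is a `Γ`-rational polyhedron: a finite intersection of halfspaces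
`{x : ⟨u, x⟩ ≥ γ}` with `u ∈ ℤⁿ` and `γ ∈ Γ`. -/
def IsGammaPolyhedron {K : Type*} [Field K] (ν : NAVal K) {n : ℕ}
    (P : Set (Fin n → ℝ)) : Prop :=
  ∃ (m : ℕ) (u : Fin m → Fin n → ℤ) (γ : Fin m → ℝ),
    (∀ i, γ i ∈ ν.valueGroup) ∧ P = {x | ∀ i, γ i ≤ pairing (u i) x}

/-- A `Γ`-rational polytope is a bounded `Γ`-rational polyhedron. -/
def IsGammaPolytope {K : Type*} [Field K] (ν : NAVal K) {n : ℕ}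
    (P : Set (Fin n → ℝ)) : Prop :=
  IsGammaPolyhedron ν P ∧ Bornology.IsBounded P

/-- The ideal `𝔪 · R[M]^S` of the tilted algebra: finite sums `Σ cᵢ • fᵢ` with
`val(cᵢ) > 0` and `fᵢ ∈ R[M]^S`. -/
def mSmulTilted {K : Type*} [Field K] (ν : NAVal K) {n : ℕ} (S : Set (Fin n → ℝ)) :
    Set (AddMonoidAlgebra K (Fin n → ℤ)) :=
  {f | ∃ (m : ℕ) (c : Fin m → K) (g : Fin m → AddMonoidAlgebra K (Fin n → ℤ)),
    (∀ i, (0 : WithTop ℝ) < ν.v (c i)) ∧ (∀ i, g i ∈ tilted ν S) ∧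
    f = ∑ i, c i • g i}

/-!
The witnesses `f = ∑ cᵢ • gᵢ` with `gᵢ ∈ R[M]^w` can be kept. The region `{x | g ∈ R[M]^x}` is
cut out by the finitely many halfspaces `val(a_u) + ⟨u, x⟩ ≥ 0` with `u` in the support of `g`,
which are `Γ`-rational. Intersecting these regions for all `gᵢ` with a sup-norm ball around `0`
whose radius lies in `Γ` (possible because a nontrivial value group is unbounded) gives `P`.
-/

open Metric Set

namespace NAVal

variable {K : Type*} [Field K] (ν : NAVal K)

theorem v_one : ν.v 1 = 0 := by
  have hne : ν.v 1 ≠ ⊤ := by simp [ν.v_eq_top_iff]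
  refine (WithTop.add_left_cancel hne ?_).symm
  rw [add_zero, ← ν.v_mul, one_mul]

theorem v_pow (a : K) (k : ℕ) : ν.v (a ^ k) = k • ν.v a := by
  induction k with
  | zero => simp [ν.v_one]
  | succ k ih => rw [pow_succ, ν.v_mul, ih, succ_nsmul]

theorem v_inv {a : K} {γ : ℝ} (ha : a ≠ 0) (hγ : ν.v a = γ) : ν.v a⁻¹ = ↑(-γ) := by
  refine WithTop.add_left_cancel (hγ ▸ WithTop.coe_ne_top) ?_
  rw [← ν.v_mul, mul_inv_cancel₀ ha, ν.v_one, hγ, ← WithTop.coe_add, add_neg_cancel,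
    WithTop.coe_zero]

theorem neg_mem_valueGroup {γ : ℝ} (hγ : γ ∈ ν.valueGroup) : -γ ∈ ν.valueGroup := by
  obtain ⟨a, ha, hv⟩ := hγ
  exact ⟨a⁻¹, inv_ne_zero ha, ν.v_inv ha hv⟩

theorem nsmul_mem_valueGroup {γ : ℝ} (hγ : γ ∈ ν.valueGroup) (k : ℕ) :
    k • γ ∈ ν.valueGroup := by
  obtain ⟨a, ha, hv⟩ := hγ
  exact ⟨a ^ k, pow_ne_zero k ha, by rw [ν.v_pow, hv, WithTop.coe_nsmul]⟩

theorem exists_mem_valueGroup_ge (hnt : ν.IsNontrivial) (B : ℝ) :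
    ∃ γ ∈ ν.valueGroup, B ≤ γ := by
  obtain ⟨a, h0, htop⟩ := hnt
  obtain ⟨γ, hγ⟩ := WithTop.ne_top_iff_exists.mp htop
  have hmem : γ ∈ ν.valueGroup := ⟨a, fun ha => htop (by rw [ha, ν.v_eq_top_iff]), hγ.symm⟩
  have hγ0 : γ ≠ 0 := by rintro rfl; exact h0 hγ.symm
  obtain ⟨δ, hδ, hδpos⟩ : ∃ δ ∈ ν.valueGroup, 0 < δ := by
    rcases hγ0.lt_or_gt with hneg | hpos
    · exact ⟨-γ, ν.neg_mem_valueGroup hmem, neg_pos.mpr hneg⟩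
    · exact ⟨γ, hmem, hpos⟩
  obtain ⟨k, hk⟩ := Archimedean.arch B hδpos
  exact ⟨k • δ, ν.nsmul_mem_valueGroup hδ k, hk⟩

end NAVal

section Polyhedra

variable {K : Type*} [Field K] (ν : NAVal K) {n : ℕ}

theorem pairing_single (j : Fin n) (k : ℤ) (x : Fin n → ℝ) :
    pairing (Pi.single j k) x = k * x j := by
  simp [pairing, Pi.single_apply]

theorem isGammaPolyhedron_of_fintype {ι : Type*} [Fintype ι] (u : ι → Fin n → ℤ) (γ : ι → ℝ)
    (hγ : ∀ i, γ i ∈ ν.valueGroup) :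
    IsGammaPolyhedron ν {x | ∀ i, γ i ≤ pairing (u i) x} := by
  let e := (Fintype.equivFin ι).symm
  refine ⟨Fintype.card ι, u ∘ e, γ ∘ e, fun k => hγ (e k), ?_⟩
  ext x
  exact e.forall_congr_right.symm

theorem isGammaPolyhedron_halfspace (u : Fin n → ℤ) {γ : ℝ} (hγ : γ ∈ ν.valueGroup) :
    IsGammaPolyhedron ν {x | γ ≤ pairing u x} := by
  simpa using isGammaPolyhedron_of_fintype ν (fun _ : Unit => u) (fun _ => γ) fun _ => hγ

theorem IsGammaPolyhedron.iInter {ι : Type*} [Finite ι] {P : ι → Set (Fin n → ℝ)}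
    (h : ∀ i, IsGammaPolyhedron ν (P i)) : IsGammaPolyhedron ν (⋂ i, P i) := by
  have := Fintype.ofFinite ι
  choose m u γ hγ hP using h
  convert isGammaPolyhedron_of_fintype ν (fun p : Σ i, Fin (m i) => u p.1 p.2)
    (fun p => γ p.1 p.2) fun p => hγ p.1 p.2
  ext x
  simp [hP, Sigma.forall]

theorem IsGammaPolyhedron.inter {P Q : Set (Fin n → ℝ)} (hP : IsGammaPolyhedron ν P)
    (hQ : IsGammaPolyhedron ν Q) : IsGammaPolyhedron ν (P ∩ Q) := by
  rw [inter_eq_iInter]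
  exact IsGammaPolyhedron.iInter ν fun b => by cases b <;> assumption

theorem isGammaPolyhedron_closedBall {r : ℝ} (hr : r ∈ ν.valueGroup) (h0 : 0 ≤ r) :
    IsGammaPolyhedron ν (closedBall (0 : Fin n → ℝ) r) := by
  have hball : closedBall (0 : Fin n → ℝ) r =
      ⋂ j, ({x | -r ≤ pairing (Pi.single j 1) x} ∩ {x | -r ≤ pairing (Pi.single j (-1)) x}) := by
    ext x
    simp [pairing_single, pi_norm_le_iff_of_nonneg h0, abs_le]
  rw [hball]
  have hneg := ν.neg_mem_valueGroup hr
  exact IsGammaPolyhedron.iInter ν fun j =>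
    (isGammaPolyhedron_halfspace ν _ hneg).inter ν (isGammaPolyhedron_halfspace ν _ hneg)

theorem isGammaPolyhedron_setOf_zero_le_v_add {a : K} (ha : a ≠ 0) (u : Fin n → ℤ) :
    IsGammaPolyhedron ν {x | 0 ≤ ν.v a + (pairing u x : WithTop ℝ)} := by
  obtain ⟨γ, hγ⟩ := WithTop.ne_top_iff_exists.mp ((ν.v_eq_top_iff a).not.mpr ha)
  convert isGammaPolyhedron_halfspace ν u (ν.neg_mem_valueGroup ⟨a, ha, hγ.symm⟩) using 3 with x
  rw [← hγ, ← WithTop.coe_add, WithTop.coe_nonneg, neg_le_iff_add_nonneg']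

theorem isGammaPolyhedron_setOf_mem_tilted (g : AddMonoidAlgebra K (Fin n → ℤ)) :
    IsGammaPolyhedron ν {x | g ∈ tilted ν {x}} := by
  have hset : {x | g ∈ tilted ν {x}} =
      ⋂ u : g.coeff.support, {x | 0 ≤ ν.v (g.coeff u) + (pairing u x : WithTop ℝ)} := by
    ext x
    simp only [tilted, mem_ofPred_eq, mem_singleton_iff, forall_eq, mem_iInter, Subtype.forall,
      Finsupp.mem_support_iff]
    refine ⟨fun h u _ => h u, fun h u => ?_⟩
    by_cases hu : g.coeff u = 0
    · simp [hu, (ν.v_eq_top_iff 0).mpr rfl]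
    · exact h u hu
  rw [hset]
  exact IsGammaPolyhedron.iInter ν fun u =>
    isGammaPolyhedron_setOf_zero_le_v_add ν (Finsupp.mem_support_iff.mp u.2) (u : Fin n → ℤ)

end Polyhedra

theorem mem_mSmulTilted_polytope_of_mem_mSmulTilted_point_general {K : Type*} [Field K]
    (ν : NAVal K) (hnt : ν.IsNontrivial) {n : ℕ}
    (w : Fin n → ℝ) (f : AddMonoidAlgebra K (Fin n → ℤ))
    (hf : f ∈ mSmulTilted ν ({w} : Set (Fin n → ℝ))) :
    ∃ P : Set (Fin n → ℝ), IsGammaPolytope ν P ∧ w ∈ P ∧ f ∈ mSmulTilted ν P := by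
  obtain ⟨m, c, g, hc, hg, rfl⟩ := hf
  obtain ⟨r, hr, hwr⟩ := ν.exists_mem_valueGroup_ge hnt ‖w‖
  refine ⟨closedBall 0 r ∩ ⋂ i, {x | g i ∈ tilted ν {x}}, ⟨?_, ?_⟩, ?_, ?_⟩
  · exact (isGammaPolyhedron_closedBall ν hr ((norm_nonneg w).trans hwr)).inter ν
      (IsGammaPolyhedron.iInter ν fun i => isGammaPolyhedron_setOf_mem_tilted ν (g i))
  · exact isBounded_closedBall.subset inter_subset_left
  · exact ⟨mem_closedBall_zero_iff.mpr hwr, mem_iInter.mpr hg⟩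
  · exact ⟨m, c, g, hc, fun i u x hx => mem_iInter.mp hx.2 i u x rfl, rfl⟩

/-- for every `w ∈ ℝⁿ` and every `f ∈ 𝔪·R[M]^w`, there is a
`Γ`-rational polytope `P` with `w ∈ P` and `f ∈ 𝔪·R[M]^P`. -/
theorem mem_mSmulTilted_polytope_of_mem_mSmulTilted_point {K : Type*} [Field K]
    [IsAlgClosed K] (ν : NAVal K) (hnt : ν.IsNontrivial) {n : ℕ} (hn : 1 ≤ n)
    (w : Fin n → ℝ) (f : AddMonoidAlgebra K (Fin n → ℤ))
    (hf : f ∈ mSmulTilted ν ({w} : Set (Fin n → ℝ))) :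
    ∃ P : Set (Fin n → ℝ), IsGammaPolytope ν P ∧ w ∈ P ∧ f ∈ mSmulTilted ν P :=
  mem_mSmulTilted_polytope_of_mem_mSmulTilted_point_general ν hnt w f hf
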